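/- Assume β ∈ [0,1] and M > 10. There exists a constant C > 0 (depending only on β and M) such that for all ω₁ > 1 one has |C[n⁰¹](ω₁)| ≤ C · ω₁^{2β − 1/2 − M/2}. -/
import Mathlib


open MeasureTheory Real

noncomputable section

/-- Japanese bracket ⟨ω⟩ = (1 + ω²)^{1/2}. -/
def jb (ω : ℝ) : ℝ := Real.sqrt (1 + ω ^ 2)

/-- n⁰¹(ω) = ⟨ω⟩^{-M/2}. -/
def n01 (M : ℝ) (ω : ℝ) : ℝ := jb ω ^ (-(M / 2))

/-- The operator C₂₁²³⁴, with ω₂ = ω₃ + ω₄ − ω₁. -/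
def C21op (β : ℝ) (k l m : ℝ → ℝ) (ω₁ : ℝ) : ℝ :=
  64 * π ^ 3 * ω₁ ^ (β - 1/2) *
    ∫ ω₃ in (0:ℝ)..(ω₁ / 2), ∫ ω₄ in (ω₁ - ω₃)..ω₁,
      (ω₃ + ω₄ - ω₁) ^ (β + 1/2) * ω₃ ^ β * ω₄ ^ β *
        (k (ω₃ + ω₄ - ω₁) * l ω₃ * m ω₄)

/-- The operator C₂₂²³⁴, with ω₂ = ω₃ + ω₄ − ω₁. -/
def C22op (β : ℝ) (k l m : ℝ → ℝ) (ω₁ : ℝ) : ℝ :=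
  64 * π ^ 3 * ω₁ ^ (β - 1/2) *
    ∫ ω₃ in (ω₁ / 2)..ω₁, ∫ ω₄ in ω₃..ω₁,
      (ω₃ + ω₄ - ω₁) ^ (β + 1/2) * ω₃ ^ β * ω₄ ^ β *
        (k (ω₃ + ω₄ - ω₁) * l ω₃ * m ω₄)

/-- The operator C₃²³⁴, with ω₂ = ω₃ + ω₄ − ω₁. -/
def C3op (β : ℝ) (k l m : ℝ → ℝ) (ω₁ : ℝ) : ℝ :=
  64 * π ^ 3 * ω₁ ^ (β - 1/2) *
    ∫ ω₃ in (0:ℝ)..ω₁, ∫ ω₄ in Set.Ioi ω₁,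
      (ω₃ + ω₄ - ω₁) ^ β * ω₃ ^ (β + 1/2) * ω₄ ^ β *
        (k (ω₃ + ω₄ - ω₁) * l ω₃ * m ω₄)

/-- The operator C₁²³⁴, with ω₂ = ω₃ + ω₄ − ω₁. -/
def C1op (β : ℝ) (k l m : ℝ → ℝ) (ω₁ : ℝ) : ℝ :=
  64 * π ^ 3 * ω₁ ^ β *
    ∫ ω₃ in Set.Ioi ω₁, ∫ ω₄ in Set.Ioi ω₃,
      (ω₃ + ω₄ - ω₁) ^ β * ω₃ ^ β * ω₄ ^ β *
        (k (ω₃ + ω₄ - ω₁) * l ω₃ * m ω₄)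

/-- The full domain of integration {0 ≤ ω₃ ≤ ω₄, ω₃ + ω₄ ≥ ω₁} ⊂ ℝ². -/
def Dom (ω₁ : ℝ) : Set (ℝ × ℝ) := {p | 0 ≤ p.1 ∧ p.1 ≤ p.2 ∧ ω₁ ≤ p.1 + p.2}

/-- The cross-section factor min{√ω₁, √ω₂, √ω₃}, with ω₂ = ω₃ + ω₄ − ω₁,
where p = (ω₃, ω₄). -/
def crossMin (ω₁ : ℝ) (p : ℝ × ℝ) : ℝ :=
  min (Real.sqrt ω₁) (min (Real.sqrt (p.1 + p.2 - ω₁)) (Real.sqrt p.1))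

/-- The operator C^{j₁j₂j₃}[k,l,m](ω₁) where the factor is k(ω_{j₁}) l(ω_{j₂}) m(ω_{j₃}),
with ω₂ = ω₃ + ω₄ − ω₁ and p = (ω₃, ω₄); here the selection of frequencies is passed
as a function `sel : (ℝ × ℝ) → ℝ × ℝ × ℝ` giving (ω_{j₁}, ω_{j₂}, ω_{j₃}). -/
def Cfull (β : ℝ) (k l m : ℝ → ℝ) (sel : ℝ → ℝ × ℝ → ℝ × ℝ × ℝ) (ω₁ : ℝ) : ℝ :=
  64 * π ^ 3 * ω₁ ^ (β - 1/2) *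
    ∫ p in Dom ω₁,
      ((p.1 + p.2 - ω₁) * p.1 * p.2) ^ β * crossMin ω₁ p *
        (k (sel ω₁ p).1 * l (sel ω₁ p).2.1 * m (sel ω₁ p).2.2)

/-- C²³⁴[k,l,m](ω₁): integrand k(ω₂) l(ω₃) m(ω₄). -/
def C234 (β : ℝ) (k l m : ℝ → ℝ) : ℝ → ℝ :=
  Cfull β k l m (fun ω₁ p => (p.1 + p.2 - ω₁, p.1, p.2))

/-- C¹²⁴[k,l,m](ω₁): integrand k(ω₁) l(ω₂) m(ω₄). -/
def C124 (β : ℝ) (k l m : ℝ → ℝ) : ℝ → ℝ :=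
  Cfull β k l m (fun ω₁ p => (ω₁, p.1 + p.2 - ω₁, p.2))

/-- C¹³⁴[k,l,m](ω₁): integrand k(ω₁) l(ω₃) m(ω₄). -/
def C134 (β : ℝ) (k l m : ℝ → ℝ) : ℝ → ℝ :=
  Cfull β k l m (fun ω₁ p => (ω₁, p.1, p.2))

/-- C¹²³[k,l,m](ω₁): integrand k(ω₁) l(ω₂) m(ω₃). -/
def C123 (β : ℝ) (k l m : ℝ → ℝ) : ℝ → ℝ :=
  Cfull β k l m (fun ω₁ p => (ω₁, p.1 + p.2 - ω₁, p.1))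

/-- The isotropic collision operator C[n](ω₁). -/
def Ciso (β : ℝ) (n : ℝ → ℝ) (ω₁ : ℝ) : ℝ :=
  64 * π ^ 3 * ω₁ ^ (β - 1/2) *
    ∫ p in Dom ω₁,
      ((p.1 + p.2 - ω₁) * p.1 * p.2) ^ β * crossMin ω₁ p *
        (n (p.1 + p.2 - ω₁) * n p.1 * n p.2 + n ω₁ * n p.1 * n p.2 -
          n ω₁ * n (p.1 + p.2 - ω₁) * n p.1 - n ω₁ * n (p.1 + p.2 - ω₁) * n p.2)


namespace CisoProofAux

lemma jb_pos (x : ℝ) : 0 < jb x := Real.sqrt_pos.mpr (by positivity)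

lemma one_le_jb (x : ℝ) : 1 ≤ jb x := by
  have h : Real.sqrt 1 ≤ Real.sqrt (1 + x ^ 2) := Real.sqrt_le_sqrt (by nlinarith)
  simpa [jb] using h

lemma le_jb {x : ℝ} (hx : 0 ≤ x) : x ≤ jb x := by
  have h : Real.sqrt (x ^ 2) ≤ Real.sqrt (1 + x ^ 2) := Real.sqrt_le_sqrt (by nlinarith)
  rwa [Real.sqrt_sq hx] at h

lemma jb_mono {x y : ℝ} (hx : 0 ≤ x) (h : x ≤ y) : jb x ≤ jb y :=
  Real.sqrt_le_sqrt (by nlinarith)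

lemma sqrt_four_mul {t : ℝ} : Real.sqrt (4 * t) = 2 * Real.sqrt t := by
  rw [show (4:ℝ) = 2 ^ 2 by norm_num, Real.sqrt_mul (by positivity) t,
    Real.sqrt_sq (by norm_num : (0:ℝ) ≤ 2)]

lemma one_add_le_two_jb {x : ℝ} (hx : 0 ≤ x) : 1 + x ≤ 2 * jb x := by
  have h1 : 1 + x = Real.sqrt ((1 + x) ^ 2) := (Real.sqrt_sq (by positivity)).symm
  have h2 : Real.sqrt ((1 + x) ^ 2) ≤ Real.sqrt (4 * (1 + x ^ 2)) :=
    Real.sqrt_le_sqrt (by nlinarith)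
  rw [sqrt_four_mul] at h2
  rw [h1]; exact h2

lemma jb_le_two_jb {w y : ℝ} (hw : 0 ≤ w) (h : w ≤ 2 * y) : jb w ≤ 2 * jb y := by
  have hy : 0 ≤ y := by linarith
  have h1 : jb w ≤ jb (2 * y) := jb_mono hw h
  have h2 : jb (2 * y) ≤ 2 * jb y := by
    have h3 : Real.sqrt (1 + (2 * y) ^ 2) ≤ Real.sqrt (4 * (1 + y ^ 2)) :=
      Real.sqrt_le_sqrt (by nlinarith)
    rw [sqrt_four_mul] at h3
    simpa [jb] using h3
  linarith

lemma jb_rpow_eq (x c : ℝ) : jb x ^ c = (1 + x ^ 2) ^ (c / 2) := by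
  rw [jb, Real.sqrt_eq_rpow, ← Real.rpow_mul (by positivity)]
  congr 1
  ring

lemma integrable_jb_rpow {c : ℝ} (hc : c < -1) :
    Integrable (fun x : ℝ => jb x ^ c) := by
  have h1 : ((Module.finrank ℝ ℝ : ℝ)) < -c := by
    simp [Module.finrank_self]; linarith
  have h := integrable_rpow_neg_one_add_norm_sq (E := ℝ) (μ := volume) h1
  refine h.congr (ae_of_all _ fun x => ?_)
  show ((1:ℝ) + ‖x‖ ^ 2) ^ (- -c / 2) = jb x ^ c
  rw [jb_rpow_eq]
  norm_num [Real.norm_eq_abs, sq_abs]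

lemma integrable_jb_rpow_sub {c : ℝ} (hc : c < -1) (ω₁ : ℝ) :
    Integrable (fun x : ℝ => jb (x - ω₁) ^ c) :=
  Integrable.comp_sub_right (integrable_jb_rpow hc) ω₁

lemma integrableG {a b : ℝ} (ha : a < -1) (hb : b < -1) (ω₁ : ℝ) :
    Integrable (fun p : ℝ × ℝ => jb p.1 ^ b * jb (p.1 + p.2 - ω₁) ^ a) := by
  have hF : Integrable (fun q : ℝ × ℝ => jb q.1 ^ b * jb (q.2 - ω₁) ^ a)
      ((volume : Measure ℝ).prod volume) :=
    Integrable.mul_prod (integrable_jb_rpow hb) (integrable_jb_rpow_sub ha ω₁)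
  have hmp := MeasureTheory.measurePreserving_prod_add (volume : Measure ℝ) volume
  have h2 := (hmp.integrable_comp hF.aestronglyMeasurable).mpr hF
  rw [Measure.volume_eq_prod]
  exact h2

lemma integralG_eq {a b : ℝ} (ω₁ : ℝ) :
    (∫ p : ℝ × ℝ, jb p.1 ^ b * jb (p.1 + p.2 - ω₁) ^ a)
      = (∫ x : ℝ, jb x ^ b) * ∫ x : ℝ, jb x ^ a := by
  rw [Measure.volume_eq_prod]
  have hmp := MeasureTheory.measurePreserving_prod_add (volume : Measure ℝ) volume
  have h := hmp.integral_comp (MeasurableEquiv.shearAddRight ℝ).measurableEmbedding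
      (fun q : ℝ × ℝ => jb q.1 ^ b * jb (q.2 - ω₁) ^ a)
  calc (∫ p : ℝ × ℝ, jb p.1 ^ b * jb (p.1 + p.2 - ω₁) ^ a
          ∂((volume : Measure ℝ).prod volume))
      = ∫ q : ℝ × ℝ, jb q.1 ^ b * jb (q.2 - ω₁) ^ a
          ∂((volume : Measure ℝ).prod volume) := h
    _ = (∫ x : ℝ, jb x ^ b) * ∫ y : ℝ, jb (y - ω₁) ^ a :=
        integral_prod_mul (fun x : ℝ => jb x ^ b) (fun y : ℝ => jb (y - ω₁) ^ a)
    _ = (∫ x : ℝ, jb x ^ b) * ∫ x : ℝ, jb x ^ a := by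
        rw [integral_sub_right_eq_self (fun y : ℝ => jb y ^ a) ω₁]

lemma measurableSet_Dom (ω₁ : ℝ) : MeasurableSet (Dom ω₁) := by
  have : Dom ω₁ = {p : ℝ × ℝ | 0 ≤ p.1} ∩ ({p : ℝ × ℝ | p.1 ≤ p.2} ∩
      {p : ℝ × ℝ | ω₁ ≤ p.1 + p.2}) := rfl
  rw [this]
  exact (measurableSet_le measurable_const measurable_fst).inter
    ((measurableSet_le measurable_fst measurable_snd).inter
      (measurableSet_le measurable_const (measurable_fst.add measurable_snd)))

lemma pointwise_bound (β M : ℝ) (hβ0 : 0 ≤ β) (hβ1 : β ≤ 1) (hM : 10 < M)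
    {ω₁ : ℝ} (hω : 1 < ω₁) {p : ℝ × ℝ} (hp : p ∈ Dom ω₁) :
    |((p.1 + p.2 - ω₁) * p.1 * p.2) ^ β * crossMin ω₁ p *
        (n01 M (p.1 + p.2 - ω₁) * n01 M p.1 * n01 M p.2 +
          n01 M ω₁ * n01 M p.1 * n01 M p.2 -
          n01 M ω₁ * n01 M (p.1 + p.2 - ω₁) * n01 M p.1 -
          n01 M ω₁ * n01 M (p.1 + p.2 - ω₁) * n01 M p.2)|
      ≤ 8 * (2:ℝ) ^ (M / 2) * ω₁ ^ (β - M / 2) *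
          (jb p.1 ^ (β + 1/2 - M / 2) * jb (p.1 + p.2 - ω₁) ^ (2 * β - M / 2)) := by
  obtain ⟨hx, hxy, hsum⟩ := hp
  set x := p.1 with hxdef
  set y := p.2 with hydef
  set w := x + y - ω₁ with hwdef
  have hω0 : (0:ℝ) < ω₁ := by linarith
  have hw : 0 ≤ w := by simp only [hwdef]; linarith
  have hy0 : 0 ≤ y := le_trans hx hxy
  have hy2 : ω₁ ≤ 2 * y := by simp only [hwdef] at *; linarith
  have hw2y : w ≤ 2 * y := by simp only [hwdef]; linarith
  have hyω : y ≤ ω₁ + w := by simp only [hwdef]; linarith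
  set m := M / 2 with hmdef
  have hm0 : (0:ℝ) < m := by simp only [hmdef]; linarith
  have h2m1 : (1:ℝ) ≤ (2:ℝ) ^ m :=
    Real.one_le_rpow (by norm_num) hm0.le
  have h2m0 : (0:ℝ) < (2:ℝ) ^ m := Real.rpow_pos_of_pos (by norm_num) _
  -- abbreviations
  set P : ℝ := ((w) * x * y) ^ β * crossMin ω₁ p with hPdef
  set S : ℝ := n01 M w * n01 M x * n01 M y + n01 M ω₁ * n01 M x * n01 M y -
      n01 M ω₁ * n01 M w * n01 M x - n01 M ω₁ * n01 M w * n01 M y with hSdef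
  -- positivity of n01
  have hn01pos : ∀ t : ℝ, 0 < n01 M t := fun t => Real.rpow_pos_of_pos (jb_pos t) _
  -- P is nonneg
  have hP0 : 0 ≤ P := by
    have h1 : 0 ≤ (w * x * y) ^ β :=
      Real.rpow_nonneg (mul_nonneg (mul_nonneg hw hx) hy0) _
    have h2 : 0 ≤ crossMin ω₁ p := by
      simp only [crossMin]
      exact le_min (Real.sqrt_nonneg _) (le_min (Real.sqrt_nonneg _) (Real.sqrt_nonneg _))
    exact mul_nonneg h1 h2
  -- bound for P
  have hP : P ≤ 2 * ω₁ ^ β * (jb x ^ (β + 1/2) * jb w ^ (2 * β)) := by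
    have hsplit : (w * x * y) ^ β = w ^ β * x ^ β * y ^ β := by
      rw [Real.mul_rpow (by positivity) hy0, Real.mul_rpow hw hx]
    have hcm : crossMin ω₁ p ≤ jb x ^ ((1:ℝ)/2) := by
      have h1 : crossMin ω₁ p ≤ Real.sqrt x :=
        (min_le_right _ _).trans (min_le_right _ _)
      have h2 : Real.sqrt x ≤ Real.sqrt (jb x) := Real.sqrt_le_sqrt (le_jb hx)
      have h3 : Real.sqrt (jb x) = jb x ^ ((1:ℝ)/2) := Real.sqrt_eq_rpow _
      linarith [h1, h2, h3.le, h3.ge]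
    have hwb : w ^ β ≤ jb w ^ β := Real.rpow_le_rpow hw (le_jb hw) hβ0
    have hxb : x ^ β ≤ jb x ^ β := Real.rpow_le_rpow hx (le_jb hx) hβ0
    have hyb : y ^ β ≤ 2 * ω₁ ^ β * jb w ^ β := by
      have h1 : y ≤ ω₁ * (2 * jb w) := by
        have h2 : ω₁ + w ≤ ω₁ * (1 + w) := by nlinarith
        have h3 : ω₁ * (1 + w) ≤ ω₁ * (2 * jb w) := by
          have := one_add_le_two_jb hw
          nlinarith
        linarith
      calc y ^ β ≤ (ω₁ * (2 * jb w)) ^ β := Real.rpow_le_rpow hy0 h1 hβ0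
        _ = ω₁ ^ β * ((2:ℝ) ^ β * jb w ^ β) := by
            rw [Real.mul_rpow hω0.le (mul_nonneg (by norm_num) (jb_pos w).le),
              Real.mul_rpow (by norm_num) (jb_pos w).le]
        _ ≤ ω₁ ^ β * (2 * jb w ^ β) := by
            have h4 : (2:ℝ) ^ β ≤ 2 := by
              calc (2:ℝ) ^ β ≤ (2:ℝ) ^ (1:ℝ) :=
                    Real.rpow_le_rpow_of_exponent_le (by norm_num) hβ1
                _ = 2 := Real.rpow_one 2
            gcongr
            exact Real.rpow_nonneg (jb_pos w).le _
        _ = 2 * ω₁ ^ β * jb w ^ β := by ring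
    have hcm0 : 0 ≤ crossMin ω₁ p := by
      simp only [crossMin]
      exact le_min (Real.sqrt_nonneg _) (le_min (Real.sqrt_nonneg _) (Real.sqrt_nonneg _))
    have hstep : P ≤ jb w ^ β * jb x ^ β * (2 * ω₁ ^ β * jb w ^ β) * jb x ^ ((1:ℝ)/2) := by
      rw [hPdef, hsplit]
      have hA : w ^ β * x ^ β ≤ jb w ^ β * jb x ^ β :=
        mul_le_mul hwb hxb (Real.rpow_nonneg hx _) (Real.rpow_nonneg (jb_pos w).le _)
      have hjj : (0:ℝ) ≤ jb w ^ β * jb x ^ β :=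
        mul_nonneg (Real.rpow_nonneg (jb_pos w).le _) (Real.rpow_nonneg (jb_pos x).le _)
      have hB : w ^ β * x ^ β * y ^ β ≤ jb w ^ β * jb x ^ β * (2 * ω₁ ^ β * jb w ^ β) :=
        mul_le_mul hA hyb (Real.rpow_nonneg hy0 _) hjj
      have hjjj : (0:ℝ) ≤ jb w ^ β * jb x ^ β * (2 * ω₁ ^ β * jb w ^ β) :=
        mul_nonneg hjj (mul_nonneg (mul_nonneg (by norm_num) (Real.rpow_nonneg hω0.le _))
          (Real.rpow_nonneg (jb_pos w).le _))
      exact mul_le_mul hB hcm hcm0 hjjj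
    calc P ≤ jb w ^ β * jb x ^ β * (2 * ω₁ ^ β * jb w ^ β) * jb x ^ ((1:ℝ)/2) := hstep
      _ = 2 * ω₁ ^ β * ((jb x ^ β * jb x ^ ((1:ℝ)/2)) * (jb w ^ β * jb w ^ β)) := by ring
      _ = 2 * ω₁ ^ β * (jb x ^ (β + 1/2) * jb w ^ (2 * β)) := by
          rw [show 2 * β = β + β by ring, Real.rpow_add (jb_pos x),
            Real.rpow_add (jb_pos w)]
  -- bounds for n01 values
  have hn1 : n01 M ω₁ ≤ ω₁ ^ (-m) := by
    simp only [n01, hmdef]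
    exact Real.rpow_le_rpow_of_nonpos hω0 (le_jb hω0.le) (by linarith)
  have hnw : n01 M w = jb w ^ (-m) := rfl
  have hnx : n01 M x = jb x ^ (-m) := rfl
  have hny1 : n01 M y ≤ (2:ℝ) ^ m * ω₁ ^ (-m) := by
    have h1 : ω₁ / 2 ≤ jb y := le_trans (by linarith) (le_jb hy0)
    have h2 : n01 M y ≤ (ω₁ / 2) ^ (-m) := by
      simp only [n01, hmdef]
      exact Real.rpow_le_rpow_of_nonpos (by positivity) h1 (by linarith)
    have h3 : (ω₁ / 2) ^ (-m) = (2:ℝ) ^ m * ω₁ ^ (-m) := by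
      rw [Real.div_rpow hω0.le (by norm_num : (0:ℝ) ≤ 2),
        Real.rpow_neg (by norm_num : (0:ℝ) ≤ 2), div_inv_eq_mul, mul_comm]
    linarith [h2, h3.le, h3.ge]
  have hny2 : n01 M y ≤ (2:ℝ) ^ m * jb w ^ (-m) := by
    have h1 : jb w / 2 ≤ jb y := by
      have := jb_le_two_jb hw hw2y
      linarith
    have h2 : n01 M y ≤ (jb w / 2) ^ (-m) := by
      simp only [n01, hmdef]
      exact Real.rpow_le_rpow_of_nonpos (div_pos (jb_pos w) two_pos) h1 (by linarith)
    have h3 : (jb w / 2) ^ (-m) = (2:ℝ) ^ m * jb w ^ (-m) := by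
      rw [Real.div_rpow (jb_pos w).le (by norm_num : (0:ℝ) ≤ 2),
        Real.rpow_neg (by norm_num : (0:ℝ) ≤ 2), div_inv_eq_mul, mul_comm]
    linarith [h2, h3.le, h3.ge]
  have hny3 : n01 M y ≤ jb x ^ (-m) := by
    simp only [n01, hmdef]
    exact Real.rpow_le_rpow_of_nonpos (jb_pos x) (jb_mono hx hxy) (by linarith)
  -- D
  have hωm0 : 0 < ω₁ ^ (-m) := Real.rpow_pos_of_pos hω0 _
  have hjwm0 : 0 < jb w ^ (-m) := Real.rpow_pos_of_pos (jb_pos w) _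
  have hjxm0 : 0 < jb x ^ (-m) := Real.rpow_pos_of_pos (jb_pos x) _
  set D : ℝ := ω₁ ^ (-m) * (jb x ^ (-m) * jb w ^ (-m)) with hDdef
  have hD0 : 0 < D := mul_pos hωm0 (mul_pos hjxm0 hjwm0)
  have hnwpos := hn01pos w
  have hnxpos := hn01pos x
  have hnypos := hn01pos y
  have hnΩpos := hn01pos ω₁
  -- term bounds
  have hT1 : n01 M w * n01 M x * n01 M y ≤ (2:ℝ) ^ m * D := by
    rw [hnw, hnx]
    calc jb w ^ (-m) * jb x ^ (-m) * n01 M y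
        ≤ jb w ^ (-m) * jb x ^ (-m) * ((2:ℝ) ^ m * ω₁ ^ (-m)) :=
          mul_le_mul_of_nonneg_left hny1 (mul_nonneg hjwm0.le hjxm0.le)
      _ = (2:ℝ) ^ m * D := by simp only [hDdef]; ring
  have hT2 : n01 M ω₁ * n01 M x * n01 M y ≤ (2:ℝ) ^ m * D := by
    rw [hnx]
    calc n01 M ω₁ * jb x ^ (-m) * n01 M y
        ≤ ω₁ ^ (-m) * jb x ^ (-m) * n01 M y :=
          mul_le_mul_of_nonneg_right
            (mul_le_mul_of_nonneg_right hn1 hjxm0.le) (hn01pos y).le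
      _ ≤ ω₁ ^ (-m) * jb x ^ (-m) * ((2:ℝ) ^ m * jb w ^ (-m)) :=
          mul_le_mul_of_nonneg_left hny2 (mul_nonneg hωm0.le hjxm0.le)
      _ = (2:ℝ) ^ m * D := by simp only [hDdef]; ring
  have hT3 : n01 M ω₁ * n01 M w * n01 M x ≤ (2:ℝ) ^ m * D := by
    rw [hnw, hnx]
    calc n01 M ω₁ * jb w ^ (-m) * jb x ^ (-m)
        ≤ ω₁ ^ (-m) * jb w ^ (-m) * jb x ^ (-m) :=
          mul_le_mul_of_nonneg_right
            (mul_le_mul_of_nonneg_right hn1 hjwm0.le) hjxm0.le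
      _ = D := by simp only [hDdef]; ring
      _ ≤ (2:ℝ) ^ m * D := le_mul_of_one_le_left hD0.le h2m1
  have hT4 : n01 M ω₁ * n01 M w * n01 M y ≤ (2:ℝ) ^ m * D := by
    rw [hnw]
    calc n01 M ω₁ * jb w ^ (-m) * n01 M y
        ≤ ω₁ ^ (-m) * jb w ^ (-m) * n01 M y :=
          mul_le_mul_of_nonneg_right
            (mul_le_mul_of_nonneg_right hn1 hjwm0.le) (hn01pos y).le
      _ ≤ ω₁ ^ (-m) * jb w ^ (-m) * (jb x ^ (-m)) :=
          mul_le_mul_of_nonneg_left hny3 (mul_nonneg hωm0.le hjwm0.le)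
      _ = D := by simp only [hDdef]; ring
      _ ≤ (2:ℝ) ^ m * D := le_mul_of_one_le_left hD0.le h2m1
  have hTpos1 : 0 < n01 M w * n01 M x * n01 M y := by positivity
  have hTpos2 : 0 < n01 M ω₁ * n01 M x * n01 M y := by positivity
  have hTpos3 : 0 < n01 M ω₁ * n01 M w * n01 M x := by positivity
  have hTpos4 : 0 < n01 M ω₁ * n01 M w * n01 M y := by positivity
  have hS : |S| ≤ 4 * (2:ℝ) ^ m * D := by
    rw [abs_le]
    constructor
    · simp only [hSdef]; linarith
    · simp only [hSdef]; linarith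
  -- combine
  have hgoal : |P * S| ≤ (2 * ω₁ ^ β * (jb x ^ (β + 1/2) * jb w ^ (2 * β))) *
      (4 * (2:ℝ) ^ m * D) := by
    rw [abs_mul, abs_of_nonneg hP0]
    have hP2 : (0:ℝ) ≤ 2 * ω₁ ^ β * (jb x ^ (β + 1/2) * jb w ^ (2 * β)) :=
      mul_nonneg (mul_nonneg (by norm_num) (Real.rpow_nonneg hω0.le _))
        (mul_nonneg (Real.rpow_nonneg (jb_pos x).le _) (Real.rpow_nonneg (jb_pos w).le _))
    exact mul_le_mul hP hS (abs_nonneg _) hP2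
  have hfin : (2 * ω₁ ^ β * (jb x ^ (β + 1/2) * jb w ^ (2 * β))) * (4 * (2:ℝ) ^ m * D)
      = 8 * (2:ℝ) ^ m * ω₁ ^ (β - m) *
          (jb x ^ (β + 1/2 - m) * jb w ^ (2 * β - m)) := by
    have e1 : ω₁ ^ (β - m) = ω₁ ^ β * ω₁ ^ (-m) := by
      rw [← Real.rpow_add hω0]; ring_nf
    have e2 : jb x ^ (β + 1/2 - m) = jb x ^ (β + 1/2) * jb x ^ (-m) := by
      rw [← Real.rpow_add (jb_pos x)]; ring_nf
    have e3 : jb w ^ (2 * β - m) = jb w ^ (2 * β) * jb w ^ (-m) := by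
      rw [← Real.rpow_add (jb_pos w)]; ring_nf
    rw [e1, e2, e3]
    simp only [hDdef]
    ring
  calc |P * S| ≤ (2 * ω₁ ^ β * (jb x ^ (β + 1/2) * jb w ^ (2 * β))) *
      (4 * (2:ℝ) ^ m * D) := hgoal
    _ = 8 * (2:ℝ) ^ m * ω₁ ^ (β - m) *
          (jb x ^ (β + 1/2 - m) * jb w ^ (2 * β - m)) := hfin

end CisoProofAux

open CisoProofAux in
/-- Upper bound: |C[n⁰¹](ω₁)| ≲ ω₁^{2β − 1/2 − M/2} for ω₁ > 1. -/
theorem Ciso_upper_bound (β M : ℝ) (hβ0 : 0 ≤ β) (hβ1 : β ≤ 1) (hM : 10 < M) :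
    ∃ C : ℝ, 0 < C ∧ ∀ ω₁ : ℝ, 1 < ω₁ →
      |Ciso β (n01 M) ω₁| ≤ C * ω₁ ^ (2 * β - 1/2 - M / 2) := by
  set a : ℝ := 2 * β - M / 2 with hadef
  set b : ℝ := β + 1/2 - M / 2 with hbdef
  have ha : a < -1 := by simp only [hadef]; linarith
  have hb : b < -1 := by simp only [hbdef]; linarith
  set Ia : ℝ := ∫ x : ℝ, jb x ^ a with hIadef
  set Ib : ℝ := ∫ x : ℝ, jb x ^ b with hIbdef
  have hIa0 : 0 ≤ Ia := integral_nonneg fun x => Real.rpow_nonneg (Real.sqrt_nonneg _) _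
  have hIb0 : 0 ≤ Ib := integral_nonneg fun x => Real.rpow_nonneg (Real.sqrt_nonneg _) _
  set K : ℝ := 8 * (2:ℝ) ^ (M / 2) with hKdef
  have hK0 : 0 < K := by
    simp only [hKdef]
    positivity
  refine ⟨64 * π ^ 3 * K * (Ib * Ia) + 1, by positivity, fun ω₁ hω => ?_⟩
  have hω0 : (0:ℝ) < ω₁ := by linarith
  set G : ℝ × ℝ → ℝ := fun p => jb p.1 ^ b * jb (p.1 + p.2 - ω₁) ^ a with hGdef
  have hG : Integrable G := integrableG ha hb ω₁
  have hG0 : ∀ p : ℝ × ℝ, 0 ≤ G p := fun p =>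
    mul_nonneg (Real.rpow_nonneg (Real.sqrt_nonneg _) _)
      (Real.rpow_nonneg (Real.sqrt_nonneg _) _)
  set c : ℝ := K * ω₁ ^ (β - M / 2) with hcdef
  have hc0 : 0 ≤ c := by
    simp only [hcdef]
    positivity
  set F : ℝ × ℝ → ℝ := fun p =>
    ((p.1 + p.2 - ω₁) * p.1 * p.2) ^ β * crossMin ω₁ p *
      (n01 M (p.1 + p.2 - ω₁) * n01 M p.1 * n01 M p.2 +
        n01 M ω₁ * n01 M p.1 * n01 M p.2 -
        n01 M ω₁ * n01 M (p.1 + p.2 - ω₁) * n01 M p.1 -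
        n01 M ω₁ * n01 M (p.1 + p.2 - ω₁) * n01 M p.2) with hFdef
  have hCiso : Ciso β (n01 M) ω₁ = 64 * π ^ 3 * ω₁ ^ (β - 1/2) * ∫ p in Dom ω₁, F p := rfl
  have step1 : |∫ p in Dom ω₁, F p| ≤ ∫ p in Dom ω₁, |F p| := by
    simpa [Real.norm_eq_abs] using
      norm_integral_le_integral_norm (μ := volume.restrict (Dom ω₁)) F
  have step2 : (∫ p in Dom ω₁, |F p|) ≤ ∫ p in Dom ω₁, c * G p := by
    refine integral_mono_of_nonneg (ae_of_all _ fun p => abs_nonneg _)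
      ((hG.const_mul c).restrict) ?_
    refine ae_restrict_of_forall_mem (measurableSet_Dom ω₁) fun p hp => ?_
    have h := pointwise_bound β M hβ0 hβ1 hM hω hp
    calc |F p| ≤ 8 * (2:ℝ) ^ (M / 2) * ω₁ ^ (β - M / 2) *
          (jb p.1 ^ (β + 1/2 - M / 2) * jb (p.1 + p.2 - ω₁) ^ (2 * β - M / 2)) := h
      _ = c * G p := by
          simp only [hcdef, hKdef, hGdef, hadef, hbdef]
          try ring
  have step3 : (∫ p in Dom ω₁, c * G p) = c * ∫ p in Dom ω₁, G p :=
    integral_const_mul c G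
  have step4 : (∫ p in Dom ω₁, G p) ≤ Ib * Ia := by
    have h1 : (∫ p in Dom ω₁, G p) ≤ ∫ p : ℝ × ℝ, G p :=
      setIntegral_le_integral hG (ae_of_all _ hG0)
    have h2 : (∫ p : ℝ × ℝ, G p) = Ib * Ia := integralG_eq ω₁
    linarith
  have habs : |Ciso β (n01 M) ω₁|
      = 64 * π ^ 3 * ω₁ ^ (β - 1/2) * |∫ p in Dom ω₁, F p| := by
    rw [hCiso, abs_mul, abs_of_nonneg (by positivity : (0:ℝ) ≤ 64 * π ^ 3 * ω₁ ^ (β - 1/2))]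
  have hpre0 : (0:ℝ) ≤ 64 * π ^ 3 * ω₁ ^ (β - 1/2) := by positivity
  have hbound : |∫ p in Dom ω₁, F p| ≤ c * (Ib * Ia) := by
    have h5 : c * (∫ p in Dom ω₁, G p) ≤ c * (Ib * Ia) :=
      mul_le_mul_of_nonneg_left step4 hc0
    calc |∫ p in Dom ω₁, F p| ≤ ∫ p in Dom ω₁, |F p| := step1
      _ ≤ ∫ p in Dom ω₁, c * G p := step2
      _ = c * ∫ p in Dom ω₁, G p := step3
      _ ≤ c * (Ib * Ia) := h5
  have hmain : |Ciso β (n01 M) ω₁|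
      ≤ 64 * π ^ 3 * K * (Ib * Ia) * ω₁ ^ (2 * β - 1/2 - M / 2) := by
    rw [habs]
    have h6 : 64 * π ^ 3 * ω₁ ^ (β - 1/2) * |∫ p in Dom ω₁, F p|
        ≤ 64 * π ^ 3 * ω₁ ^ (β - 1/2) * (c * (Ib * Ia)) :=
      mul_le_mul_of_nonneg_left hbound hpre0
    have h7 : 64 * π ^ 3 * ω₁ ^ (β - 1/2) * (c * (Ib * Ia))
        = 64 * π ^ 3 * K * (Ib * Ia) * ω₁ ^ (2 * β - 1/2 - M / 2) := by
      have e : ω₁ ^ (2 * β - 1/2 - M / 2) = ω₁ ^ (β - 1/2) * ω₁ ^ (β - M / 2) := by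
        rw [← Real.rpow_add hω0]; ring_nf
      rw [e]
      simp only [hcdef]
      ring
    linarith
  have hpow0 : (0:ℝ) < ω₁ ^ (2 * β - 1/2 - M / 2) := Real.rpow_pos_of_pos hω0 _
  nlinarith [hmain, hpow0]
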